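/- For every even integer n ≥ 6 there exists a probability distribution on the simple graphs with vertex set {1,...,n} that is pairwise independent but not matching independent. -/

import Mathlib

open scoped Classical

noncomputable def pr {n : ℕ} (μ : SimpleGraph (Fin n) → ℝ) (P : SimpleGraph (Fin n) → Prop) : ℝ :=
  ∑ G : SimpleGraph (Fin n), if P G then μ G else 0

def IsDist {n : ℕ} (μ : SimpleGraph (Fin n) → ℝ) : Prop :=
  (∀ G, 0 ≤ μ G) ∧ ∑ G : SimpleGraph (Fin n), μ G = 1

def PairwiseIndep {n : ℕ} (μ : SimpleGraph (Fin n) → ℝ) : Prop :=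
  ∀ u v x y : Fin n, u ≠ v → x ≠ y → u ≠ x → u ≠ y → v ≠ x → v ≠ y →
    pr μ (fun G => G.Adj u v ∧ G.Adj x y)
      = pr μ (fun G => G.Adj u v) * pr μ (fun G => G.Adj x y)

def IsMatchingSet {n : ℕ} (M : Finset (Sym2 (Fin n))) : Prop :=
  (∀ e ∈ M, ¬ e.IsDiag) ∧
    ∀ e ∈ M, ∀ f ∈ M, e ≠ f → ∀ v : Fin n, v ∈ e → v ∉ f

def MatchingIndep {n : ℕ} (μ : SimpleGraph (Fin n) → ℝ) : Prop :=
  ∀ M : Finset (Sym2 (Fin n)), IsMatchingSet M →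
    ∀ S ⊆ M, pr μ (fun G => ∀ e ∈ S, e ∈ G.edgeSet)
      = ∏ e ∈ S, pr μ (fun G => e ∈ G.edgeSet)


/-!
Toss two fair coins `a, b` and put three disjoint edges `e₀, e₁, e₂` into the graph on the events
`a`, `b` and `a ≠ b`. Any two of these events are independent, so every two distinct edges are
independent, but the three events never occur together, so the matching `{e₀, e₁, e₂}` is all
present with probability `0 ≠ 1/8`.
-/

open Finset

section Planting

variable {n : ℕ} {Ω ι : Type*} [Fintype Ω]

noncomputable def pushforwardUniform (g : Ω → SimpleGraph (Fin n)) : SimpleGraph (Fin n) → ℝ :=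
  fun G => #{ω | g ω = G} / Fintype.card Ω

theorem pr_pushforwardUniform (g : Ω → SimpleGraph (Fin n)) (P : SimpleGraph (Fin n) → Prop) :
    pr (pushforwardUniform g) P = #{ω | P (g ω)} / Fintype.card Ω := by
  simp only [pr, pushforwardUniform]
  rw [← sum_boole, ← sum_fiberwise univ g, sum_div]
  refine sum_congr rfl fun G _ => ?_
  rw [sum_congr rfl fun ω hω => by rw [(mem_filter.1 hω).2]]
  split_ifs <;> simp [div_eq_mul_inv]

theorem isDist_pushforwardUniform [Nonempty Ω] (g : Ω → SimpleGraph (Fin n)) :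
    IsDist (pushforwardUniform g) := by
  refine ⟨fun G => by unfold pushforwardUniform; positivity, ?_⟩
  have h := pr_pushforwardUniform g (fun _ => True)
  simp only [pr, if_true, filter_true, card_univ] at h
  rw [h, div_self (by simp)]

/-- Under the uniform distribution on `Ω`, with denominators cleared. -/
def PairwiseIndepEvents [DecidableEq Ω] (S : ι → Finset Ω) : Prop :=
  ∀ i j, i ≠ j → Fintype.card Ω * #(S i ∩ S j) = #(S i) * #(S j)

def plantedGraph (e : ι → Sym2 (Fin n)) (S : ι → Finset Ω) (ω : Ω) : SimpleGraph (Fin n) :=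
  SimpleGraph.fromEdgeSet {f | ∃ i, e i = f ∧ ω ∈ S i}

noncomputable def edgeEvent (e : ι → Sym2 (Fin n)) (S : ι → Finset Ω) (f : Sym2 (Fin n)) :
    Finset Ω :=
  {ω | ∃ i, e i = f ∧ ω ∈ S i}

theorem mem_edgeSet_plantedGraph {e : ι → Sym2 (Fin n)} {S : ι → Finset Ω} {f : Sym2 (Fin n)}
    (hf : ¬ f.IsDiag) (ω : Ω) :
    f ∈ (plantedGraph e S ω).edgeSet ↔ ω ∈ edgeEvent e S f := by
  simp [plantedGraph, edgeEvent, hf]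

theorem edgeEvent_apply {e : ι → Sym2 (Fin n)} (he : Function.Injective e) (S : ι → Finset Ω)
    (i : ι) : edgeEvent e S (e i) = S i := by
  ext ω
  simp [edgeEvent, he.eq_iff]

theorem edgeEvent_of_notMem_range {e : ι → Sym2 (Fin n)} (S : ι → Finset Ω) {f : Sym2 (Fin n)}
    (hf : f ∉ Set.range e) : edgeEvent e S f = ∅ := by
  ext ω
  simp only [edgeEvent, mem_filter, mem_univ, true_and, notMem_empty,
    iff_false, not_exists, not_and]
  exact fun i hi => absurd ⟨i, hi⟩ hf

theorem card_mul_card_edgeEvent_inter [DecidableEq Ω] {e : ι → Sym2 (Fin n)}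
    (he : Function.Injective e) {S : ι → Finset Ω} (hS : PairwiseIndepEvents S)
    {f f' : Sym2 (Fin n)} (hff' : f ≠ f') :
    Fintype.card Ω * #(edgeEvent e S f ∩ edgeEvent e S f')
      = #(edgeEvent e S f) * #(edgeEvent e S f') := by
  by_cases hf : f ∈ Set.range e
  · by_cases hf' : f' ∈ Set.range e
    · obtain ⟨i, rfl⟩ := hf
      obtain ⟨j, rfl⟩ := hf'
      rw [edgeEvent_apply he, edgeEvent_apply he]
      exact hS i j (fun hij => hff' (congrArg e hij))
    · simp [edgeEvent_of_notMem_range S hf']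
  · simp [edgeEvent_of_notMem_range S hf]

theorem pairwiseIndep_plantedGraph [DecidableEq Ω] {e : ι → Sym2 (Fin n)}
    (he : Function.Injective e) {S : ι → Finset Ω} (hS : PairwiseIndepEvents S) :
    PairwiseIndep (pushforwardUniform (plantedGraph e S)) := by
  intro u v x y huv hxy hux huy hvx hvy
  have hne : s(u, v) ≠ s(x, y) := by simp [hux, huy, hvx, hvy]
  have hadj : ∀ {a b : Fin n}, a ≠ b → ∀ ω,
      (plantedGraph e S ω).Adj a b ↔ ω ∈ edgeEvent e S s(a, b) := fun hab ω => by
    rw [← SimpleGraph.mem_edgeSet, mem_edgeSet_plantedGraph (by simpa using hab)]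
  simp only [pr_pushforwardUniform, hadj huv, hadj hxy, filter_and, filter_univ_mem]
  have key := card_mul_card_edgeEvent_inter he hS hne
  rcases (Fintype.card Ω).eq_zero_or_pos with hc | hc
  · simp [hc]
  · field_simp
    rw [mul_comm]
    exact_mod_cast key

theorem not_matchingIndep_plantedGraph [Fintype ι] {e : ι → Sym2 (Fin n)}
    (he : Function.Injective e) (hM : IsMatchingSet (univ.image e)) {S : ι → Finset Ω}
    (hS : ∀ i, (S i).Nonempty) (hdisj : ∀ ω, ¬ ∀ i, ω ∈ S i) :
    ¬ MatchingIndep (pushforwardUniform (plantedGraph e S)) := by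
  have hevent : ∀ i ω, e i ∈ (plantedGraph e S ω).edgeSet ↔ ω ∈ S i := fun i ω => by
    rw [mem_edgeSet_plantedGraph (hM.1 _ (mem_image_of_mem e (mem_univ i))),
      edgeEvent_apply he]
  intro hMI
  have h := hMI _ hM _ subset_rfl
  simp only [pr_pushforwardUniform, prod_image he.injOn, forall_mem_image,
    mem_univ, true_implies, hevent, hdisj, filter_false, filter_univ_mem,
    card_empty, Nat.cast_zero, zero_div] at h
  refine prod_ne_zero_iff.2 (fun i _ => ?_) h.symm
  have hc : 0 < Fintype.card Ω := (hS i).card_pos.trans_le (card_le_univ _)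
  exact div_ne_zero (by exact_mod_cast (hS i).card_pos.ne') (by positivity)

end Planting

/-- The events `a`, `b` and `a ≠ b` for two fair coins `(a, b)`. -/
def xorEvents : Fin 3 → Finset (Bool × Bool) :=
  ![{(true, false), (true, true)}, {(false, true), (true, true)}, {(true, false), (false, true)}]

theorem pairwiseIndepEvents_xorEvents : PairwiseIndepEvents xorEvents := by
  unfold PairwiseIndepEvents; decide

theorem xorEvents_nonempty (i : Fin 3) : (xorEvents i).Nonempty := by
  revert i; decide

theorem xorEvents_not_all (ω : Bool × Bool) : ¬ ∀ i, ω ∈ xorEvents i := by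
  revert ω; decide

def matchingEdges {n : ℕ} (hn : 6 ≤ n) (i : Fin 3) : Sym2 (Fin n) :=
  s(⟨2 * i, by omega⟩, ⟨2 * i + 1, by omega⟩)

theorem mem_matchingEdges {n : ℕ} (hn : 6 ≤ n) {i : Fin 3} {v : Fin n} :
    v ∈ matchingEdges hn i ↔ v.val / 2 = i := by
  simp only [matchingEdges, Sym2.mem_iff, Fin.ext_iff]
  omega

theorem matchingEdges_injective {n : ℕ} (hn : 6 ≤ n) : Function.Injective (matchingEdges hn) := by
  intro i j h
  have hv : (⟨2 * i, by omega⟩ : Fin n) ∈ matchingEdges hn j := h ▸ Sym2.mem_mk_left _ _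
  rw [mem_matchingEdges] at hv
  exact Fin.ext (by simp at hv; omega)

theorem isMatchingSet_image_matchingEdges {n : ℕ} (hn : 6 ≤ n) :
    IsMatchingSet (univ.image (matchingEdges hn)) := by
  simp only [IsMatchingSet, mem_image, mem_univ, true_and, forall_exists_index,
    forall_apply_eq_imp_iff]
  refine ⟨fun i => ?_, fun i j hij v hvi hvj => hij ?_⟩
  · simp [matchingEdges, Fin.ext_iff]
  · rw [mem_matchingEdges] at hvi hvj
    rw [Fin.ext (by omega : i.val = j.val)]

theorem pairwise_not_matching (n : ℕ) (hn : 6 ≤ n) :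
    ∃ μ : SimpleGraph (Fin n) → ℝ, IsDist μ ∧ PairwiseIndep μ ∧ ¬ MatchingIndep μ :=
  ⟨pushforwardUniform (plantedGraph (matchingEdges hn) xorEvents),
    isDist_pushforwardUniform _,
    pairwiseIndep_plantedGraph (matchingEdges_injective hn) pairwiseIndepEvents_xorEvents,
    not_matchingIndep_plantedGraph (matchingEdges_injective hn)
      (isMatchingSet_image_matchingEdges hn) xorEvents_nonempty xorEvents_not_all⟩
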